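/- The map Ψ_{2N} that flips (from down to up) every step of a bridge occurring at a hitting time of a new negative minimum is a bijection from bridges of length 2N onto meanders of length 2N; moreover for each k it restricts to a bijection from bridges with exactly k peaks onto meanders with exactly k peaks, preserving peak positions. -/

import Mathlib

/-- The value at time `i` of the Bernoulli path with `n` steps encoded by
`f : Fin n → Bool` (`true` = step `+1`, `false` = step `-1`), started at `0`. -/
def pathVal {n : ℕ} (f : Fin n → Bool) (i : ℕ) : ℤ :=
  ∑ j ∈ Finset.range i, (if h : j < n then (if f ⟨j, h⟩ then (1 : ℤ) else -1) else 0)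

/-- `x` is a peak: `1 ≤ x ≤ n-1` and `S(x-1) = S(x+1) = S(x) - 1`. -/
def IsPeak {n : ℕ} (f : Fin n → Bool) (x : ℕ) : Prop :=
  0 < x ∧ x < n ∧ pathVal f x = pathVal f (x - 1) + 1 ∧
    pathVal f (x + 1) = pathVal f x - 1

instance {n : ℕ} (f : Fin n → Bool) (x : ℕ) : Decidable (IsPeak f x) := by
  unfold IsPeak; infer_instance

/-- Number of peaks of the path encoded by `f`. -/
def numPeaks {n : ℕ} (f : Fin n → Bool) : ℕ :=
  ((Finset.range n).filter (fun x => IsPeak f x)).card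

/-- The path stays nonnegative on `[0, n]`. -/
def IsNonneg {n : ℕ} (f : Fin n → Bool) : Prop :=
  ∀ i ∈ Finset.range (n + 1), 0 ≤ pathVal f i

instance {n : ℕ} (f : Fin n → Bool) : Decidable (IsNonneg f) := by
  unfold IsNonneg; infer_instance

/-- Time `i+1` is a hitting time of a new (negative) minimum of the path. -/
def NewNegMin {n : ℕ} (f : Fin n → Bool) (i : ℕ) : Prop :=
  pathVal f (i + 1) < 0 ∧ ∀ j ∈ Finset.range (i + 1), pathVal f (i + 1) < pathVal f j

instance {n : ℕ} (f : Fin n → Bool) (i : ℕ) : Decidable (NewNegMin f i) := by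
  unfold NewNegMin; infer_instance

/-- The map `Ψ₂ₙ`: flip (from down to up) every step of the path occurring at
a hitting time of a new (negative) minimum. The step indexed by `i : Fin (2N)`
is the one from time `i` to time `i+1`. -/
def Psi {N : ℕ} (f : Fin (2 * N) → Bool) : Fin (2 * N) → Bool :=
  fun i => if NewNegMin f (i : ℕ) then true else f i

/-! Write `S` for the bridge and `m i = min_{j ≤ i} S j ≤ 0` for its running minimum. The flipped
steps are exactly those where `m` drops, so `Ψ S = S - 2 m ≥ 0`. Conversely `-m` can be read off
`Z = Ψ S` as the capped future minimum `min (Z (2N) / 2) (min_{i ≤ t < 2N} Z t)`; flipping back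
down the steps where this quantity increases inverts `Ψ` on all meanders. Flipping a new-minimum
step neither creates nor destroys a peak, because a down step right after a new minimum is again a
new minimum. -/

section pathVal

variable {n : ℕ} (f : Fin n → Bool)

theorem pathVal_zero : pathVal f 0 = 0 := by simp [pathVal]

theorem pathVal_succ_of_lt {i : ℕ} (hi : i < n) :
    pathVal f (i + 1) = pathVal f i + if f ⟨i, hi⟩ then 1 else -1 := by
  simp [pathVal, Finset.sum_range_succ, hi]

theorem pathVal_succ_of_le {i : ℕ} (hi : n ≤ i) : pathVal f (i + 1) = pathVal f i := by
  simp [pathVal, Finset.sum_range_succ, hi.not_gt]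

theorem pathVal_of_le {i : ℕ} (hi : n ≤ i) : pathVal f i = pathVal f n := by
  induction i, hi using Nat.le_induction with
  | base => rfl
  | succ i hi ih => rw [pathVal_succ_of_le f hi, ih]

theorem abs_pathVal_succ_sub_le (i : ℕ) : |pathVal f (i + 1) - pathVal f i| ≤ 1 := by
  rcases lt_or_ge i n with hi | hi
  · rw [pathVal_succ_of_lt f hi]; split <;> simp
  · simp [pathVal_succ_of_le f hi]

theorem pathVal_succ_eq_add_one_iff {i : ℕ} (hi : i < n) :
    pathVal f (i + 1) = pathVal f i + 1 ↔ f ⟨i, hi⟩ = true := by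
  rw [pathVal_succ_of_lt f hi]; cases f ⟨i, hi⟩ <;> simp

theorem pathVal_succ_eq_sub_one_iff {i : ℕ} (hi : i < n) :
    pathVal f (i + 1) = pathVal f i - 1 ↔ f ⟨i, hi⟩ = false := by
  rw [pathVal_succ_of_lt f hi]; cases f ⟨i, hi⟩ <;> simp <;> omega

theorem even_pathVal_add {i : ℕ} (hi : i ≤ n) : Even (pathVal f i + i) := by
  induction i with
  | zero => simp [pathVal_zero]
  | succ i ih =>
    obtain ⟨k, hk⟩ := ih (by omega)
    rw [pathVal_succ_of_lt f (by omega)]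
    split
    · exact ⟨k + 1, by push_cast; omega⟩
    · exact ⟨k, by push_cast; omega⟩

end pathVal

section runningMin

variable {n : ℕ} (f : Fin n → Bool)

def runningMin : ℕ → ℤ
  | 0 => 0
  | i + 1 => min (runningMin i) (pathVal f (i + 1))

theorem runningMin_le_pathVal {i j : ℕ} (hj : j ≤ i) : runningMin f i ≤ pathVal f j := by
  induction i with
  | zero => simp [runningMin, Nat.le_zero.1 hj, pathVal_zero]
  | succ i ih =>
    rcases hj.lt_or_eq with hj | rfl
    · exact (min_le_left _ _).trans (ih (by omega))
    · exact min_le_right _ _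

theorem runningMin_le_zero (i : ℕ) : runningMin f i ≤ 0 := by
  simpa [pathVal_zero] using runningMin_le_pathVal f (Nat.zero_le i)

theorem exists_pathVal_eq_runningMin (i : ℕ) : ∃ j ≤ i, pathVal f j = runningMin f i := by
  induction i with
  | zero => exact ⟨0, le_rfl, pathVal_zero f⟩
  | succ i ih =>
    obtain ⟨j, hj, hji⟩ := ih
    rcases min_choice (runningMin f i) (pathVal f (i + 1)) with h | h
    · exact ⟨j, by omega, by rw [runningMin, h, hji]⟩
    · exact ⟨i + 1, le_rfl, by rw [runningMin, h]⟩

theorem newNegMin_iff (i : ℕ) : NewNegMin f i ↔ pathVal f (i + 1) < runningMin f i := by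
  constructor
  · rintro ⟨-, hlt⟩
    obtain ⟨j, hj, hji⟩ := exists_pathVal_eq_runningMin f i
    exact hji ▸ hlt j (Finset.mem_range_succ_iff.2 hj)
  · intro h
    exact ⟨h.trans_le (runningMin_le_zero f i),
      fun j hj => h.trans_le (runningMin_le_pathVal f (Finset.mem_range_succ_iff.1 hj))⟩

theorem lt_of_newNegMin {i : ℕ} (h : NewNegMin f i) : i < n := by
  by_contra hi
  have hlt := (newNegMin_iff f i).1 h
  rw [pathVal_succ_of_le f (not_lt.1 hi)] at hlt
  exact hlt.not_ge (runningMin_le_pathVal f le_rfl)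

theorem runningMin_succ_cases (i : ℕ) :
    (NewNegMin f i ∧ pathVal f i = runningMin f i ∧ pathVal f (i + 1) = runningMin f i - 1 ∧
        runningMin f (i + 1) = runningMin f i - 1) ∨
      (¬NewNegMin f i ∧ runningMin f i ≤ pathVal f (i + 1) ∧
        runningMin f (i + 1) = runningMin f i) := by
  have hstep := abs_le.1 (abs_pathVal_succ_sub_le f i)
  have hmin := runningMin_le_pathVal f (le_refl i)
  rw [newNegMin_iff, runningMin]
  omega

end runningMin

section psi

variable {N : ℕ} (f : Fin (2 * N) → Bool)

theorem pathVal_psi_succ_sub (i : ℕ) :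
    pathVal (Psi f) (i + 1) - pathVal (Psi f) i =
      if NewNegMin f i then 1 else pathVal f (i + 1) - pathVal f i := by
  rcases lt_or_ge i (2 * N) with hi | hi
  · rw [pathVal_succ_of_lt _ hi, pathVal_succ_of_lt f hi]
    by_cases h : NewNegMin f i <;> simp [Psi, h]
  · have h : ¬NewNegMin f i := fun h => (lt_of_newNegMin f h).not_ge hi
    simp [pathVal_succ_of_le _ hi, h]

theorem pathVal_psi (i : ℕ) : pathVal (Psi f) i = pathVal f i - 2 * runningMin f i := by
  induction i with
  | zero => simp [pathVal_zero, runningMin]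
  | succ i ih =>
    have hstep := pathVal_psi_succ_sub f i
    rcases runningMin_succ_cases f i with ⟨h, hm⟩ | ⟨h, hm⟩
    · rw [if_pos h] at hstep; omega
    · rw [if_neg h] at hstep; omega

theorem isNonneg_psi : IsNonneg (Psi f) := fun i _ => by
  have := runningMin_le_pathVal f (le_refl i)
  have := runningMin_le_zero f i
  rw [pathVal_psi]; omega

theorem isPeak_psi_iff (x : ℕ) : IsPeak (Psi f) x ↔ IsPeak f x := by
  rcases x with _ | y
  · simp [IsPeak]
  simp only [IsPeak, Nat.add_sub_cancel, pathVal_psi]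
  have := runningMin_le_pathVal f (le_refl y)
  rcases runningMin_succ_cases f y with ⟨-, h⟩ | ⟨-, h⟩ <;>
    rcases runningMin_succ_cases f (y + 1) with ⟨-, h'⟩ | ⟨-, h'⟩ <;> omega

theorem numPeaks_psi : numPeaks (Psi f) = numPeaks f := by
  unfold numPeaks
  congr 1
  exact Finset.filter_congr fun x _ => isPeak_psi_iff f x

end psi

section cappedFutureMin

variable {n : ℕ} (g : Fin n → Bool)

/-- `min (pathVal g n / 2) (min_{i ≤ t < n} pathVal g t)`. -/
def cappedFutureMin (i : ℕ) : ℤ :=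
  if i < n then min (pathVal g i) (cappedFutureMin (i + 1)) else pathVal g n / 2
termination_by n - i

theorem cappedFutureMin_of_lt {i : ℕ} (hi : i < n) :
    cappedFutureMin g i = min (pathVal g i) (cappedFutureMin g (i + 1)) := by
  rw [cappedFutureMin, if_pos hi]

theorem cappedFutureMin_of_le {i : ℕ} (hi : n ≤ i) : cappedFutureMin g i = pathVal g n / 2 := by
  rw [cappedFutureMin, if_neg hi.not_gt]

def psiInv : Fin n → Bool :=
  fun i => if cappedFutureMin g i < cappedFutureMin g (i + 1) then false else g i

variable {g}

theorem cappedFutureMin_le_pathVal (hg : 0 ≤ pathVal g n) (i : ℕ) :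
    cappedFutureMin g i ≤ pathVal g i := by
  rcases lt_or_ge i n with hi | hi
  · rw [cappedFutureMin_of_lt g hi]; exact min_le_left _ _
  · rw [cappedFutureMin_of_le g hi, pathVal_of_le g hi]; omega

theorem cappedFutureMin_le_succ (i : ℕ) : cappedFutureMin g i ≤ cappedFutureMin g (i + 1) := by
  rcases lt_or_ge i n with hi | hi
  · rw [cappedFutureMin_of_lt g hi]; exact min_le_right _ _
  · rw [cappedFutureMin_of_le g hi, cappedFutureMin_of_le g (by omega)]

theorem cappedFutureMin_nonneg (hg : IsNonneg g) (i : ℕ) : 0 ≤ cappedFutureMin g i := by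
  have hn := hg n (Finset.self_mem_range_succ n)
  rcases lt_or_ge i n with hi | hi
  · rw [cappedFutureMin_of_lt g hi]
    exact le_min (hg i (Finset.mem_range.2 (by omega))) (cappedFutureMin_nonneg hg (i + 1))
  · rw [cappedFutureMin_of_le g hi]; omega
termination_by n - i

theorem cappedFutureMin_zero (hg : IsNonneg g) : cappedFutureMin g 0 = 0 := by
  have := cappedFutureMin_le_pathVal (hg n (Finset.self_mem_range_succ n)) 0
  have := cappedFutureMin_nonneg hg 0
  rw [pathVal_zero] at *; omega

theorem cappedFutureMin_succ_of_lt (hg : 0 ≤ pathVal g n) {i : ℕ}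
    (h : cappedFutureMin g i < cappedFutureMin g (i + 1)) :
    pathVal g i = cappedFutureMin g i ∧ pathVal g (i + 1) = cappedFutureMin g i + 1 ∧
      cappedFutureMin g (i + 1) = cappedFutureMin g i + 1 := by
  have hi : i < n := by
    by_contra hi
    rw [cappedFutureMin_of_le g (by omega), cappedFutureMin_of_le g (by omega)] at h
    exact lt_irrefl _ h
  have := cappedFutureMin_of_lt g hi
  have := cappedFutureMin_le_pathVal hg (i + 1)
  have := abs_le.1 (abs_pathVal_succ_sub_le g i)
  omega

theorem pathVal_psiInv_succ_sub (i : ℕ) :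
    pathVal (psiInv g) (i + 1) - pathVal (psiInv g) i =
      if cappedFutureMin g i < cappedFutureMin g (i + 1) then -1
      else pathVal g (i + 1) - pathVal g i := by
  rcases lt_or_ge i n with hi | hi
  · rw [pathVal_succ_of_lt _ hi, pathVal_succ_of_lt g hi]
    by_cases h : cappedFutureMin g i < cappedFutureMin g (i + 1) <;> simp [psiInv, h]
  · simp [pathVal_succ_of_le _ hi, cappedFutureMin_of_le g hi,
      cappedFutureMin_of_le g (hi.trans i.le_succ)]

theorem pathVal_psiInv (hg : IsNonneg g) (i : ℕ) :
    pathVal (psiInv g) i = pathVal g i - 2 * cappedFutureMin g i := by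
  have hn := hg n (Finset.self_mem_range_succ n)
  induction i with
  | zero => simp [pathVal_zero, cappedFutureMin_zero hg]
  | succ i ih =>
    have hstep := pathVal_psiInv_succ_sub (g := g) i
    have := cappedFutureMin_le_succ (g := g) i
    by_cases h : cappedFutureMin g i < cappedFutureMin g (i + 1)
    · have := cappedFutureMin_succ_of_lt hn h
      rw [if_pos h] at hstep; omega
    · rw [if_neg h] at hstep; omega

theorem pathVal_psiInv_eq_zero (hg : IsNonneg g) (hn : Even n) : pathVal (psiInv g) n = 0 := by
  obtain ⟨a, ha⟩ := even_pathVal_add g le_rfl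
  obtain ⟨b, hb⟩ := hn
  rw [pathVal_psiInv hg, cappedFutureMin_of_le g le_rfl]
  omega

theorem runningMin_psiInv (hg : IsNonneg g) (i : ℕ) :
    runningMin (psiInv g) i = -cappedFutureMin g i := by
  have hn := hg n (Finset.self_mem_range_succ n)
  induction i with
  | zero => simp [runningMin, cappedFutureMin_zero hg]
  | succ i ih =>
    have := pathVal_psiInv hg (i + 1)
    have := cappedFutureMin_le_pathVal hn (i + 1)
    have := cappedFutureMin_le_succ (g := g) i
    rw [runningMin, ih]
    by_cases h : cappedFutureMin g i < cappedFutureMin g (i + 1)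
    · have := cappedFutureMin_succ_of_lt hn h; omega
    · omega

theorem newNegMin_psiInv_iff (hg : IsNonneg g) (i : ℕ) :
    NewNegMin (psiInv g) i ↔ cappedFutureMin g i < cappedFutureMin g (i + 1) := by
  have hn := hg n (Finset.self_mem_range_succ n)
  have := cappedFutureMin_le_pathVal hn (i + 1)
  rw [newNegMin_iff, runningMin_psiInv hg, pathVal_psiInv hg]
  constructor
  · intro h; omega
  · intro h; have := cappedFutureMin_succ_of_lt hn h; omega

end cappedFutureMin

section inverse

variable {N : ℕ}

theorem psi_psiInv {g : Fin (2 * N) → Bool} (hg : IsNonneg g) : Psi (psiInv g) = g := by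
  funext i
  by_cases h : cappedFutureMin g i < cappedFutureMin g (i + 1)
  · have := cappedFutureMin_succ_of_lt (hg _ (Finset.self_mem_range_succ _)) h
    simp only [Psi, newNegMin_psiInv_iff hg, if_pos h]
    exact ((pathVal_succ_eq_add_one_iff g i.isLt).1 (by omega)).symm
  · simp [Psi, psiInv, newNegMin_psiInv_iff hg, h]

theorem cappedFutureMin_psi {f : Fin (2 * N) → Bool} (hf : pathVal f (2 * N) = 0) {i : ℕ}
    (hi : i ≤ 2 * N) : cappedFutureMin (Psi f) i = -runningMin f i := by
  rcases hi.lt_or_eq with hi | rfl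
  · rw [cappedFutureMin_of_lt _ hi, cappedFutureMin_psi hf (i := i + 1) hi, pathVal_psi]
    have := runningMin_le_pathVal f (le_refl i)
    rcases runningMin_succ_cases f i with ⟨-, h⟩ | ⟨-, h⟩ <;> omega
  · rw [cappedFutureMin_of_le _ le_rfl, pathVal_psi, hf]; omega
termination_by 2 * N - i

theorem psiInv_psi {f : Fin (2 * N) → Bool} (hf : pathVal f (2 * N) = 0) :
    psiInv (Psi f) = f := by
  funext i
  have := cappedFutureMin_psi hf i.isLt.le
  have := cappedFutureMin_psi hf (i := i + 1) i.isLt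
  rcases runningMin_succ_cases f i with ⟨h, hm⟩ | ⟨h, hm⟩
  · have hlt : cappedFutureMin (Psi f) i < cappedFutureMin (Psi f) (i + 1) := by omega
    simp only [psiInv, if_pos hlt]
    exact ((pathVal_succ_eq_sub_one_iff f i.isLt).1 (by omega)).symm
  · have hlt : ¬cappedFutureMin (Psi f) i < cappedFutureMin (Psi f) (i + 1) := by omega
    simp [psiInv, hlt, Psi, h]

end inverse

/-- `Ψ₂ₙ` is a bijection from bridges of length `2N` onto meanders of length
`2N`; it restricts, for each `k`, to a bijection from bridges with exactly `k`
peaks onto meanders with exactly `k` peaks, and it preserves peak positions. -/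
theorem psi_bijOn (N : ℕ) :
    Set.BijOn (Psi (N := N))
      {f | pathVal f (2 * N) = 0} {f | IsNonneg f} ∧
    (∀ k : ℕ,
      Set.BijOn (Psi (N := N))
        {f | pathVal f (2 * N) = 0 ∧ numPeaks f = k}
        {f | IsNonneg f ∧ numPeaks f = k}) ∧
    (∀ f : Fin (2 * N) → Bool, pathVal f (2 * N) = 0 →
      ∀ x : ℕ, IsPeak f x ↔ IsPeak (Psi f) x) := by
  have hinv : Set.InvOn psiInv (Psi (N := N)) {f | pathVal f (2 * N) = 0} {f | IsNonneg f} :=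
    ⟨fun _ hf => psiInv_psi hf, fun _ hg => psi_psiInv hg⟩
  have hPsi : Set.MapsTo (Psi (N := N)) {f | pathVal f (2 * N) = 0} {f | IsNonneg f} :=
    fun f _ => isNonneg_psi f
  have hPsiInv :
      Set.MapsTo psiInv {f | IsNonneg f} {f : Fin (2 * N) → Bool | pathVal f (2 * N) = 0} :=
    fun _ hg => pathVal_psiInv_eq_zero hg (even_two_mul N)
  refine ⟨hinv.bijOn hPsi hPsiInv, fun k => ?_, fun f _ x => (isPeak_psi_iff f x).symm⟩
  refine (hinv.mono (fun _ hf => hf.1) (fun _ hg => hg.1)).bijOn ?_ ?_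
  · exact fun f hf => ⟨isNonneg_psi f, (numPeaks_psi f).trans hf.2⟩
  · exact fun g hg => ⟨hPsiInv hg.1, by rw [← numPeaks_psi, psi_psiInv hg.1, hg.2]⟩
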